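/- Let d ≥ 1 and let N : ℝ^d → ℝ be a seminorm taking integer values on ℤ^d, with dual unit ball B* = {y ∈ ℝ^d : ⟨x, y⟩ ≤ N(x) for all x ∈ ℝ^d}. Let y₀ ∈ B* be a point exposed by x₀ ∈ ℝ^d, and for each n let xₙ ∈ ℤ^d be a lattice point at minimal Euclidean distance from n·x₀. Then limₙ dist(⟨xₙ, y₀⟩, ℤ) = 0, where dist(t, ℤ) denotes the distance from the real number t to the nearest integer. -/

import Mathlib

/-!
Choose `yₙ` in the dual ball with `⟪xₙ, yₙ⟫ = N xₙ` (Hahn–Banach). Writing `xₙ = n • x₀ + eₙ`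
with `‖eₙ‖ ≤ √d`, we get `n ⟪x₀, y₀ - yₙ⟫ + (N xₙ - ⟪xₙ, y₀⟫) = ⟪eₙ, yₙ - y₀⟫`, and both terms
on the left are nonnegative. The right side is bounded, so `⟪x₀, yₙ⟫ → ⟪x₀, y₀⟫`, and since `x₀`
exposes `y₀` in the compact dual ball, `yₙ → y₀`. Hence the gap
`N xₙ - ⟪xₙ, y₀⟫ ≤ √d ‖yₙ - y₀‖` tends to `0`, while `N xₙ` is an integer.
-/

open RealInnerProductSpace Filter Topology

lemma IsCompact.tendsto_of_tendsto_comp {X Y ι : Type*} [TopologicalSpace X] [TopologicalSpace Y]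
    [T2Space Y] {K : Set X} (hK : IsCompact K) {f : X → Y} (hf : Continuous f) {y₀ : X}
    (hfib : ∀ y ∈ K, f y = f y₀ → y = y₀) {l : Filter ι} {u : ι → X}
    (hu : ∀ᶠ i in l, u i ∈ K) (hfu : Tendsto (f ∘ u) l (𝓝 (f y₀))) : Tendsto u l (𝓝 y₀) :=
  hK.tendsto_nhds_of_unique_mapClusterPt hu fun z hzK hz =>
    hfib z hzK <| eq_of_nhds_neBot (ClusterPt.mono (hz.continuousAt_comp hf.continuousAt) hfu).neBot

lemma EuclideanSpace.exists_integral_norm_sub_le_sqrt {d : ℕ} (v : EuclideanSpace ℝ (Fin d)) :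
    ∃ z : EuclideanSpace ℝ (Fin d), (∀ i, ∃ m : ℤ, z i = m) ∧ ‖z - v‖ ≤ √d := by
  refine ⟨WithLp.toLp 2 fun i => (round (v i) : ℝ), fun i => ⟨_, rfl⟩, ?_⟩
  rw [EuclideanSpace.norm_eq]
  refine Real.sqrt_le_sqrt ?_
  calc ∑ i, ‖(round (v i) : ℝ) - v i‖ ^ 2 ≤ ∑ _i : Fin d, (1 : ℝ) ^ 2 := by
        gcongr with i
        rw [Real.norm_eq_abs, abs_sub_comm]
        linarith [abs_sub_round (v i)]
    _ = d := by simp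

namespace Seminorm

variable {E : Type*} [NormedAddCommGroup E] [InnerProductSpace ℝ E]

def dualBall (p : Seminorm ℝ E) : Set E := {y | ∀ x, ⟪x, y⟫ ≤ p x}

lemma isClosed_dualBall (p : Seminorm ℝ E) : IsClosed p.dualBall := by
  simp only [dualBall, Set.ofPred_forall]
  exact isClosed_iInter fun x => isClosed_le (continuous_const.inner continuous_id) continuous_const

variable [FiniteDimensional ℝ E]

lemma isCompact_dualBall (p : Seminorm ℝ E) : IsCompact p.dualBall := by
  obtain ⟨C, hC0, hC⟩ := p.bound_of_continuous_normedSpace p.convexOn.locallyLipschitz.continuous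
  refine Metric.isCompact_of_isClosed_isBounded p.isClosed_dualBall ?_
  refine (Metric.isBounded_iff_subset_closedBall 0).2 ⟨C, fun y hy => ?_⟩
  have : ‖y‖ * ‖y‖ ≤ C * ‖y‖ := by
    rw [← real_inner_self_eq_norm_mul_norm]
    exact (hy y).trans (hC y)
  rw [mem_closedBall_zero_iff]
  nlinarith [norm_nonneg y]

lemma exists_mem_dualBall_inner_eq (p : Seminorm ℝ E) (x : E) :
    ∃ y ∈ p.dualBall, ⟪x, y⟫ = p x := by
  rcases eq_or_ne x 0 with rfl | hx
  · exact ⟨0, fun z => by simp, by simp⟩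
  set f := LinearPMap.mkSpanSingleton (σ := RingHom.id ℝ) x (p x) hx
  have hf : ∀ z : f.domain, f z ≤ p z := by
    rintro ⟨_, hz⟩
    obtain ⟨c, rfl⟩ := Submodule.mem_span_singleton.mp hz
    rw [LinearPMap.mkSpanSingleton'_apply, map_smul_eq_mul, smul_eq_mul, Real.norm_eq_abs]
    exact mul_le_mul_of_nonneg_right (le_abs_self c) (apply_nonneg p x)
  obtain ⟨g, hgf, hgp⟩ := Module.Dual.exists_extension_of_le_seminorm_real f.domain f.toFun hf
  refine ⟨(InnerProductSpace.toDual ℝ E).symm (LinearMap.toContinuousLinearMap g),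
    fun z => ?_, ?_⟩
  · rw [real_inner_comm, InnerProductSpace.toDual_symm_apply]
    exact (le_abs_self _).trans (hgp z)
  · rw [real_inner_comm, InnerProductSpace.toDual_symm_apply]
    exact (hgf ⟨x, Submodule.mem_span_singleton_self x⟩).trans
      (LinearPMap.mkSpanSingleton_apply ℝ ℝ hx (p x))

lemma tendsto_of_tendsto_inner_of_exposed (p : Seminorm ℝ E) {x₀ y₀ : E}
    (hexp : ∀ y ∈ p.dualBall, y ≠ y₀ → ⟪x₀, y⟫ < ⟪x₀, y₀⟫) {y : ℕ → E}
    (hy : ∀ n, y n ∈ p.dualBall) (hlim : Tendsto (fun n => ⟪x₀, y n⟫) atTop (𝓝 ⟪x₀, y₀⟫)) :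
    Tendsto y atTop (𝓝 y₀) :=
  p.isCompact_dualBall.tendsto_of_tendsto_comp (f := fun y => ⟪x₀, y⟫)
    (continuous_const.inner continuous_id)
    (fun z hz hxz => by_contra fun hne => (hexp z hz hne).ne hxz) (Eventually.of_forall hy) hlim

lemma tendsto_sub_inner_of_exposed (p : Seminorm ℝ E) {x₀ y₀ : E} (hy₀ : y₀ ∈ p.dualBall)
    (hexp : ∀ y ∈ p.dualBall, y ≠ y₀ → ⟪x₀, y⟫ < ⟪x₀, y₀⟫) {x : ℕ → E} {C : ℝ}
    (hx : ∀ n : ℕ, ‖x n - (n : ℝ) • x₀‖ ≤ C) :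
    Tendsto (fun n => p (x n) - ⟪x n, y₀⟫) atTop (𝓝 0) := by
  choose y hyB hyx using fun n => p.exists_mem_dualBall_inner_eq (x n)
  have hsplit (n : ℕ) : (n : ℝ) * ⟪x₀, y₀ - y n⟫ + (p (x n) - ⟪x n, y₀⟫)
      = ⟪x n - (n : ℝ) • x₀, y n - y₀⟫ := by
    simp only [← hyx n, inner_sub_left, inner_sub_right, real_inner_smul_left]
    ring
  have hgap_nonneg (n : ℕ) : 0 ≤ p (x n) - ⟪x n, y₀⟫ := sub_nonneg.2 (hy₀ _)
  have hshift_nonneg (n : ℕ) : 0 ≤ ⟪x₀, y₀ - y n⟫ := by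
    rw [inner_sub_right, sub_nonneg]
    rcases eq_or_ne (y n) y₀ with h | h
    · rw [h]
    · exact (hexp _ (hyB n) h).le
  have herr (n : ℕ) : ⟪x n - (n : ℝ) • x₀, y n - y₀⟫ ≤ C * ‖y n - y₀‖ :=
    (real_inner_le_norm _ _).trans (mul_le_mul_of_nonneg_right (hx n) (norm_nonneg _))
  obtain ⟨R, hR⟩ := isBounded_iff_forall_norm_le.1 p.isCompact_dualBall.isBounded
  have hC : 0 ≤ C := (norm_nonneg _).trans (hx 0)
  have hshift : Tendsto (fun n => ⟪x₀, y₀ - y n⟫) atTop (𝓝 0) := by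
    refine squeeze_zero' (Eventually.of_forall hshift_nonneg) ?_
      (tendsto_const_div_atTop_nhds_zero_nat (C * (R + R)))
    filter_upwards [eventually_gt_atTop 0] with n hn
    rw [le_div_iff₀ (by positivity), mul_comm]
    calc (n : ℝ) * ⟪x₀, y₀ - y n⟫ ≤ C * ‖y n - y₀‖ := by linarith [hsplit n, hgap_nonneg n, herr n]
      _ ≤ C * (R + R) := by
        gcongr
        exact (norm_sub_le _ _).trans (add_le_add (hR _ (hyB n)) (hR _ hy₀))
  have hy : Tendsto y atTop (𝓝 y₀) := p.tendsto_of_tendsto_inner_of_exposed hexp hyB <| by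
    simpa [inner_sub_right] using hshift.const_sub ⟪x₀, y₀⟫
  have hgap_le (n : ℕ) : p (x n) - ⟪x n, y₀⟫ ≤ C * ‖y n - y₀‖ := by
    nlinarith [hsplit n, hshift_nonneg n, herr n, n.cast_nonneg (α := ℝ)]
  refine squeeze_zero hgap_nonneg hgap_le ?_
  simpa using ((hy.sub_const y₀).norm).const_mul C

end Seminorm

theorem inner_with_exposed_point_tends_to_integers_general
    (d : ℕ) (N : EuclideanSpace ℝ (Fin d) → ℝ)
    (hhom : ∀ (c : ℝ) (x : EuclideanSpace ℝ (Fin d)), N (c • x) = |c| * N x)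
    (hadd : ∀ x y : EuclideanSpace ℝ (Fin d), N (x + y) ≤ N x + N y)
    (hint : ∀ x : EuclideanSpace ℝ (Fin d),
      (∀ i, ∃ m : ℤ, x i = (m : ℝ)) → ∃ m : ℤ, N x = (m : ℝ))
    (Bstar : Set (EuclideanSpace ℝ (Fin d)))
    (hBstar : Bstar = {y : EuclideanSpace ℝ (Fin d) |
      ∀ x : EuclideanSpace ℝ (Fin d), ⟪x, y⟫ ≤ N x})
    (y₀ : EuclideanSpace ℝ (Fin d)) (hy₀ : y₀ ∈ Bstar)
    (x₀ : EuclideanSpace ℝ (Fin d))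
    (hexp : ∀ y ∈ Bstar, y ≠ y₀ → ⟪x₀, y⟫ < ⟪x₀, y₀⟫)
    (x : ℕ → EuclideanSpace ℝ (Fin d))
    (hxint : ∀ n, ∀ i, ∃ m : ℤ, x n i = (m : ℝ))
    (hxmin : ∀ n, ∀ z : EuclideanSpace ℝ (Fin d), (∀ i, ∃ m : ℤ, z i = (m : ℝ)) →
      ‖x n - (n : ℝ) • x₀‖ ≤ ‖z - (n : ℝ) • x₀‖) :
    Tendsto (fun n => |⟪x n, y₀⟫ - (round ⟪x n, y₀⟫ : ℝ)|) atTop (nhds 0) := by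
  let p : Seminorm ℝ (EuclideanSpace ℝ (Fin d)) :=
    Seminorm.of N hadd fun c x => by rw [hhom, Real.norm_eq_abs]
  have hB : Bstar = p.dualBall := hBstar
  subst hB
  have hdist (n : ℕ) : ‖x n - (n : ℝ) • x₀‖ ≤ √d := by
    obtain ⟨z, hz, hzd⟩ := EuclideanSpace.exists_integral_norm_sub_le_sqrt ((n : ℝ) • x₀)
    exact (hxmin n z hz).trans hzd
  have hgap := (p.tendsto_sub_inner_of_exposed hy₀ hexp hdist).abs
  rw [abs_zero] at hgap
  refine squeeze_zero (fun n => abs_nonneg _) (fun n => ?_) hgap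
  obtain ⟨m, hm⟩ := hint (x n) (hxint n)
  calc |⟪x n, y₀⟫ - round ⟪x n, y₀⟫| ≤ |⟪x n, y₀⟫ - m| := round_le _ m
    _ = |p (x n) - ⟪x n, y₀⟫| := by rw [abs_sub_comm, ← hm]; rfl

/-- If `y₀` is an exposed point of the dual unit ball of an integer-valued seminorm,
and `xₙ ∈ ℤ^d` is a closest lattice point to `n • x₀`, then `⟪xₙ, y₀⟫` tends to `ℤ`:
its distance to the nearest integer tends to `0`. -/
theorem inner_with_exposed_point_tends_to_integers
    (d : ℕ) (hd : 1 ≤ d) (N : EuclideanSpace ℝ (Fin d) → ℝ)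
    (hhom : ∀ (c : ℝ) (x : EuclideanSpace ℝ (Fin d)), N (c • x) = |c| * N x)
    (hadd : ∀ x y : EuclideanSpace ℝ (Fin d), N (x + y) ≤ N x + N y)
    (hint : ∀ x : EuclideanSpace ℝ (Fin d),
      (∀ i, ∃ m : ℤ, x i = (m : ℝ)) → ∃ m : ℤ, N x = (m : ℝ))
    (Bstar : Set (EuclideanSpace ℝ (Fin d)))
    (hBstar : Bstar = {y : EuclideanSpace ℝ (Fin d) |
      ∀ x : EuclideanSpace ℝ (Fin d), ⟪x, y⟫ ≤ N x})
    (y₀ : EuclideanSpace ℝ (Fin d)) (hy₀ : y₀ ∈ Bstar)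
    (x₀ : EuclideanSpace ℝ (Fin d))
    (hexp : ∀ y ∈ Bstar, y ≠ y₀ → ⟪x₀, y⟫ < ⟪x₀, y₀⟫)
    (x : ℕ → EuclideanSpace ℝ (Fin d))
    (hxint : ∀ n, ∀ i, ∃ m : ℤ, x n i = (m : ℝ))
    (hxmin : ∀ n, ∀ z : EuclideanSpace ℝ (Fin d), (∀ i, ∃ m : ℤ, z i = (m : ℝ)) →
      ‖x n - (n : ℝ) • x₀‖ ≤ ‖z - (n : ℝ) • x₀‖) :
    Tendsto (fun n => |⟪x n, y₀⟫ - (round ⟪x n, y₀⟫ : ℝ)|) atTop (nhds 0) :=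
  inner_with_exposed_point_tends_to_integers_general d N hhom hadd hint Bstar hBstar y₀ hy₀ x₀ hexp
    x hxint hxmin
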